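/- arXiv:2505.18798 — 2 statements merged into one kernel-verified Lean document; each statement's English description precedes it below -/
import Mathlib

section
/- If u : ℝ² → ℝ is a smooth solution of the nKdV equation e^{−t/t₀} u_t + u u_x + u_xxx = 0, then for any constant ε the function ũ(x, t) = u(x − ε t₀(e^{t/t₀} − 1), t) + ε is also a solution of the nKdV equation. -/
/-- Partial derivative in the first (spatial) variable. -/
noncomputable def px (u : ℝ → ℝ → ℝ) : ℝ → ℝ → ℝ := fun x t => deriv (fun y => u y t) x

/-- Partial derivative in the second (time) variable. -/
noncomputable def pt (u : ℝ → ℝ → ℝ) : ℝ → ℝ → ℝ := fun x t => deriv (fun s => u x s) t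

/-- u solves the nKdV equation e^{−t/t₀} u_t + u u_x + u_xxx = 0. -/
def IsNKdVSolution (t₀ : ℝ) (u : ℝ → ℝ → ℝ) : Prop :=
  ∀ x t, Real.exp (-t / t₀) * pt u x t + u x t * px u x t + px (px (px u)) x t = 0

lemma px_eq_fderiv (G : ℝ × ℝ → ℝ) (hG : Differentiable ℝ G) (x t : ℝ) :
    deriv (fun y => G (y, t)) x = fderiv ℝ G (x, t) (1, 0) := by
  have h := (hG (x, t)).hasFDerivAt.comp_hasDerivAt x
    ((hasDerivAt_id x).prodMk (hasDerivAt_const x t))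
  simpa [Function.comp_def] using h.deriv

lemma pt_eq_fderiv (G : ℝ × ℝ → ℝ) (hG : Differentiable ℝ G) (x t : ℝ) :
    deriv (fun s => G (x, s)) t = fderiv ℝ G (x, t) (0, 1) := by
  have h := (hG (x, t)).hasFDerivAt.comp_hasDerivAt t
    ((hasDerivAt_const t x).prodMk (hasDerivAt_id t))
  simpa [Function.comp_def] using h.deriv

/-- Generalized Galilean boost symmetry of the nKdV equation. -/
theorem nkdv_boost_symmetry (t₀ : ℝ) (ht₀ : 0 < t₀) (u : ℝ → ℝ → ℝ)
    (hu : ContDiff ℝ (⊤ : ℕ∞) (fun p : ℝ × ℝ => u p.1 p.2))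
    (hsol : IsNKdVSolution t₀ u) (ε : ℝ) :
    IsNKdVSolution t₀ (fun x t => u (x - ε * t₀ * (Real.exp (t / t₀) - 1)) t + ε) := by
  intro x t
  set F : ℝ × ℝ → ℝ := fun p => u p.1 p.2 with hFdef
  have hF : Differentiable ℝ F := hu.differentiable (by simp)
  set c : ℝ → ℝ := fun s => ε * t₀ * (Real.exp (s / t₀) - 1) with hcdef
  set V : ℝ → ℝ → ℝ := fun x t => u (x - c t) t + ε with hVdef
  -- spatial derivatives (unconditional, via translation invariance of deriv)
  have hpx : ∀ y s, px V y s = px u (y - c s) s := by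
    intro y s
    show deriv (fun z => (fun z => u z s) (z - c s) + ε) y = _
    rw [deriv_add_const]
    exact deriv_comp_sub_const (fun z => u z s) (c s) y
  have hpxx : ∀ y s, px (px V) y s = px (px u) (y - c s) s := by
    intro y s
    show deriv (fun z => px V z s) y = _
    rw [show (fun z => px V z s) = fun z => (fun z => px u z s) (z - c s) from
      funext fun z => hpx z s]
    exact deriv_comp_sub_const (fun z => px u z s) (c s) y
  have hpxxx : ∀ y s, px (px (px V)) y s = px (px (px u)) (y - c s) s := by
    intro y s
    show deriv (fun z => px (px V) z s) y = _
    rw [show (fun z => px (px V) z s) = fun z => (fun z => px (px u) z s) (z - c s) from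
      funext fun z => hpxx z s]
    exact deriv_comp_sub_const (fun z => px (px u) z s) (c s) y
  -- derivative of the shift c
  have hc : HasDerivAt c (ε * Real.exp (t / t₀)) t := by
    have h0 : HasDerivAt (fun s : ℝ => s / t₀) (1 / t₀) t := (hasDerivAt_id t).div_const t₀
    have h1 := (h0.exp.sub_const 1).const_mul (ε * t₀)
    convert h1 using 1
    · rfl
    · rfl
    field_simp
  -- time derivative of V via the chain rule
  have hγ : HasDerivAt (fun s => (x - c s, s)) ((-(ε * Real.exp (t / t₀)), 1) : ℝ × ℝ) t := by
    have := ((hasDerivAt_const t x).sub hc).prodMk (hasDerivAt_id t)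
    simpa using this
  have hcomp : HasDerivAt (fun s => F (x - c s, s))
      (fderiv ℝ F (x - c t, t) (-(ε * Real.exp (t / t₀)), 1)) t :=
    (hF (x - c t, t)).hasFDerivAt.comp_hasDerivAt_of_eq t hγ rfl
  have hptV : pt V x t = fderiv ℝ F (x - c t, t) (-(ε * Real.exp (t / t₀)), 1) := by
    have h := hcomp.add_const ε
    exact h.deriv
  have hsplit : fderiv ℝ F (x - c t, t) (-(ε * Real.exp (t / t₀)), 1)
      = pt u (x - c t) t - (ε * Real.exp (t / t₀)) * px u (x - c t) t := by
    have hv : ((-(ε * Real.exp (t / t₀)), 1) : ℝ × ℝ)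
        = ((0 : ℝ), (1 : ℝ)) + (-(ε * Real.exp (t / t₀))) • ((1 : ℝ), (0 : ℝ)) := by
      simp [Prod.ext_iff]
    rw [hv, map_add, map_smul]
    have h1 : px u (x - c t) t = fderiv ℝ F (x - c t, t) (1, 0) := px_eq_fderiv F hF _ _
    have h2 : pt u (x - c t) t = fderiv ℝ F (x - c t, t) (0, 1) := pt_eq_fderiv F hF _ _
    rw [← h1, ← h2]
    simp
    ring
  have hE : Real.exp (-t / t₀) * Real.exp (t / t₀) = 1 := by
    rw [← Real.exp_add]; simp [neg_div]
  have key := hsol (x - c t) t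
  show Real.exp (-t / t₀) * pt V x t + V x t * px V x t + px (px (px V)) x t = 0
  rw [hptV, hsplit, hpx, hpxxx]
  have hVval : V x t = u (x - c t) t + ε := rfl
  rw [hVval]
  linear_combination key - ε * px u (x - c t) t * hE
end

section
/- If u : ℝ² → ℝ is a smooth solution of the nKdV equation e^{−t/t₀} u_t + u u_x + u_xxx = 0, then for any constant ε the time-reparametrized function ũ(x, t) = u(x, t₀ · log(e^{t/t₀} + ε)) is also a solution of the nKdV equation, provided e^{t/t₀} + ε > 0 for all t in the domain considered. -/
/-- Time-reparametrization symmetry of the nKdV equation. -/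
theorem nkdv_time_reparam_symmetry (t₀ : ℝ) (ht₀ : 0 < t₀) (u : ℝ → ℝ → ℝ)
    (hu : ContDiff ℝ (⊤ : ℕ∞) (fun p : ℝ × ℝ => u p.1 p.2))
    (hsol : IsNKdVSolution t₀ u) (ε : ℝ)
    (hpos : ∀ t : ℝ, 0 < Real.exp (t / t₀) + ε) :
    IsNKdVSolution t₀ (fun x t => u x (t₀ * Real.log (Real.exp (t / t₀) + ε))) := by
  intro x t
  have ht₀' : t₀ ≠ 0 := ne_of_gt ht₀
  set τ : ℝ → ℝ := fun s => t₀ * Real.log (Real.exp (s / t₀) + ε) with hτ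
  -- differentiability of u in the time variable
  have hdu : Differentiable ℝ (fun s => u x s) := by
    have h := hu.differentiable (by simp)
    exact h.comp (Differentiable.prodMk (differentiable_const x) differentiable_id)
  -- derivative of τ
  have h1 : HasDerivAt (fun s : ℝ => s / t₀) (1 / t₀) t := by
    simpa using (hasDerivAt_id t).div_const t₀
  have h2 : HasDerivAt (fun s : ℝ => Real.exp (s / t₀)) (Real.exp (t / t₀) * (1 / t₀)) t :=
    h1.exp
  have h3 : HasDerivAt (fun s : ℝ => Real.exp (s / t₀) + ε)
      (Real.exp (t / t₀) * (1 / t₀)) t := h2.add_const ε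
  have h4 : HasDerivAt (fun s : ℝ => Real.log (Real.exp (s / t₀) + ε))
      ((Real.exp (t / t₀) * (1 / t₀)) / (Real.exp (t / t₀) + ε)) t :=
    h3.log (ne_of_gt (hpos t))
  have h5 : HasDerivAt τ (t₀ * ((Real.exp (t / t₀) * (1 / t₀)) / (Real.exp (t / t₀) + ε))) t :=
    h4.const_mul t₀
  have hut : HasDerivAt (fun s => u x s) (pt u x (τ t)) (τ t) := (hdu (τ t)).hasDerivAt
  have hchain : HasDerivAt (fun s => u x (τ s))
      (pt u x (τ t) * (t₀ * ((Real.exp (t / t₀) * (1 / t₀)) / (Real.exp (t / t₀) + ε)))) t :=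
    hut.comp t h5
  have hpt : pt (fun x t => u x (τ t)) x t
      = pt u x (τ t) * (t₀ * ((Real.exp (t / t₀) * (1 / t₀)) / (Real.exp (t / t₀) + ε))) :=
    hchain.deriv
  have hpx3 : px (px (px (fun x t => u x (τ t)))) x t = px (px (px u)) x (τ t) := rfl
  show Real.exp (-t / t₀) * pt (fun x t => u x (τ t)) x t
      + u x (τ t) * px (fun x t => u x (τ t)) x t
      + px (px (px (fun x t => u x (τ t)))) x t = 0
  rw [hpt, hpx3]
  have hpx : px (fun x t => u x (τ t)) x t = px u x (τ t) := rfl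
  rw [hpx]
  have hsol' := hsol x (τ t)
  have hkey : Real.exp (-t / t₀)
      * (t₀ * ((Real.exp (t / t₀) * (1 / t₀)) / (Real.exp (t / t₀) + ε)))
      = Real.exp (-(τ t) / t₀) := by
    have hτt : -(τ t) / t₀ = -Real.log (Real.exp (t / t₀) + ε) := by
      field_simp [hτ]
      ring
    rw [hτt, Real.exp_neg, Real.exp_log (hpos t)]
    rw [neg_div, Real.exp_neg]
    field_simp [ne_of_gt (hpos t)]
  calc Real.exp (-t / t₀)
      * (pt u x (τ t) * (t₀ * ((Real.exp (t / t₀) * (1 / t₀)) / (Real.exp (t / t₀) + ε))))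
      + u x (τ t) * px u x (τ t) + px (px (px u)) x (τ t)
      = Real.exp (-(τ t) / t₀) * pt u x (τ t)
        + u x (τ t) * px u x (τ t) + px (px (px u)) x (τ t) := by
        rw [← hkey]; ring
    _ = 0 := hsol'
end
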